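/- Let k ∈ ℂ with Re k > 0 and Im k > 0, let α ∈ ℂ with Im α ≥ 0, let C > 0, and fix x₀ ∈ ℝ and y₀ > 0. For 0 ≤ y < y₀ define g(x, y) = (1/4π)·∫_ℝ e^{γ(λ)(y−y₀)}·e^{iλ(x−x₀)}/γ(λ) dλ + (1/4π)·∫_ℝ e^{−γ(λ)(y+y₀)}·e^{iλ(x−x₀)}/γ(λ) dλ + 2iα·∫_0^C [ (1/4π)·∫_ℝ e^{−γ(λ)(y+y₀+η)}·e^{iλ(x−x₀)}/γ(λ) dλ ]·e^{iαη} dη + (iα/2π)·∫_ℝ e^{−γ(λ)(y+y₀)}·(e^{−(γ(λ)−iα)C}/(γ(λ)−iα))·e^{iλ(x−x₀)}/γ(λ) dλ. Then for every x ∈ ℝ, the map y ↦ g(x, y) is differentiable at y = 0 and −(∂g/∂y)(x, 0) − iα·g(x, 0) = 0. -/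

import Mathlib

open MeasureTheory

section HybridAux
open Complex Set

lemma integrable_exp_neg_abs' {b : ℝ} (hb : 0 < b) :
    Integrable (fun x : ℝ => Real.exp (-b * |x|)) := by
  have h1 : IntegrableOn (fun x : ℝ => Real.exp (-b * |x|)) (Ioi 0) :=
    (exp_neg_integrableOn_Ioi 0 hb).congr_fun
      (fun x hx => by rw [abs_of_pos hx]) measurableSet_Ioi
  have h2 : IntegrableOn (fun x : ℝ => Real.exp (-b * |x|)) (Iic 0) := by
    rw [IntegrableOn, ← Measure.map_neg_eq_self (volume : Measure ℝ)]
    have m : MeasurableEmbedding fun x : ℝ => -x :=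
      (Homeomorph.neg ℝ).measurableEmbedding
    rw [Measure.restrict_map m.measurable measurableSet_Iic,
      m.integrable_map_iff]
    simp only [Function.comp_def, abs_neg, neg_preimage, neg_Iic, neg_zero]
    exact Iff.mpr integrableOn_Ici_iff_integrableOn_Ioi h1
  have := h2.union h1
  rwa [Iic_union_Ioi, integrableOn_univ] at this


lemma hasDerivAt_cexp_real (c : ℂ) (t : ℝ) :
    HasDerivAt (fun s : ℝ => Complex.exp (c * s)) (c * Complex.exp (c * t)) t := by
  have h0 : HasDerivAt (fun w : ℂ => c * w) (c * 1) (t : ℂ) :=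
    (hasDerivAt_id (t : ℂ)).const_mul c
  have h : HasDerivAt (fun w : ℂ => Complex.exp (c * w))
      (Complex.exp (c * t) * (c * 1)) (t : ℂ) :=
    (Complex.hasDerivAt_exp (c * t)).comp (t : ℂ) h0
  have := h.comp_ofReal
  simpa [mul_comm] using this


section Gamma
variable {k : ℂ} {γ : ℝ → ℂ}

lemma z_ne' (hk_re : 0 < k.re) (hk_im : 0 < k.im) (l : ℝ) :
    ((l : ℂ) ^ 2 - k ^ 2) ≠ 0 := by
  intro h
  have : ((l : ℂ) ^ 2 - k ^ 2).im = -(2 * k.re * k.im) := by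
    simp [pow_two, Complex.sub_im, Complex.mul_im]; ring
  rw [h] at this
  simp only [Complex.zero_im] at this
  nlinarith

lemma gamma_measurable (hk_re : 0 < k.re) (hk_im : 0 < k.im)
    (hγ : ∀ l : ℝ, γ l = ((l : ℂ) ^ 2 - k ^ 2) ^ ((1 : ℂ) / 2)) :
    Measurable γ := by
  have h : γ = fun l : ℝ => Complex.exp (Complex.log ((l:ℂ)^2 - k^2) * ((1:ℂ)/2)) :=
    funext fun l => by rw [hγ l, Complex.cpow_def_of_ne_zero (z_ne' hk_re hk_im l)]
  rw [h]
  exact Complex.measurable_exp.comp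
    ((Complex.measurable_log.comp
      ((Complex.measurable_ofReal.pow_const 2).sub_const (k^2))).mul_const _)

lemma gamma_re_pos' (hk_re : 0 < k.re) (hk_im : 0 < k.im)
    (hγ : ∀ l : ℝ, γ l = ((l : ℂ) ^ 2 - k ^ 2) ^ ((1 : ℂ) / 2)) (l : ℝ) :
    0 < (γ l).re := by
  have hz := z_ne' hk_re hk_im l
  rw [hγ, Complex.cpow_def_of_ne_zero hz, Complex.exp_re]
  apply mul_pos (Real.exp_pos _)
  apply Real.cos_pos_of_mem_Ioo
  have harg1 : -Real.pi < ((l : ℂ) ^ 2 - k ^ 2).arg := Complex.neg_pi_lt_arg _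
  have harg2 : ((l : ℂ) ^ 2 - k ^ 2).arg < 0 := by
    rw [Complex.arg_neg_iff]
    have : ((l : ℂ) ^ 2 - k ^ 2).im = -(2 * k.re * k.im) := by
      simp [pow_two, Complex.sub_im, Complex.mul_im]; ring
    rw [this]; nlinarith
  have him : (Complex.log ((l:ℂ)^2 - k^2) * (1/2)).im
      = ((l : ℂ) ^ 2 - k ^ 2).arg * (1/2) := by
    simp [Complex.mul_im, Complex.log_im]
  rw [him]
  constructor <;> nlinarith [Real.pi_pos]

lemma two_re_sq (hk_re : 0 < k.re) (hk_im : 0 < k.im)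
    (hγ : ∀ l : ℝ, γ l = ((l : ℂ) ^ 2 - k ^ 2) ^ ((1 : ℂ) / 2)) (l : ℝ) :
    (γ l).re ^ 2 - (γ l).im ^ 2 = ((l:ℂ)^2 - k^2).re ∧
    (γ l).re ^ 2 + (γ l).im ^ 2 = ‖(l:ℂ)^2 - k^2‖ := by
  have h : γ l ^ 2 = (l : ℂ) ^ 2 - k ^ 2 := by
    rw [hγ, sq, ← Complex.cpow_add _ _ (z_ne' hk_re hk_im l)]
    norm_num
  constructor
  · rw [← h]; simp [pow_two, Complex.mul_re]
  · calc (γ l).re ^ 2 + (γ l).im ^ 2 = ‖γ l‖ ^ 2 := by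
          rw [Complex.sq_norm, Complex.normSq_apply]; ring
    _ = ‖γ l ^ 2‖ := (norm_pow _ 2).symm
    _ = _ := by rw [h]

/-- uniform positive lower bound on `Re γ`. -/
lemma gamma_re_uniform (hk_re : 0 < k.re) (hk_im : 0 < k.im)
    (hγ : ∀ l : ℝ, γ l = ((l : ℂ) ^ 2 - k ^ 2) ^ ((1 : ℂ) / 2)) :
    ∃ ρ > 0, ∀ l : ℝ, ρ ≤ (γ l).re := by
  set a : ℝ := k.re ^ 2 - k.im ^ 2 with ha
  set c : ℝ := 2 * k.re * k.im with hc
  have hc0 : 0 < c := by positivity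
  have hden : 0 < 2 * |a| + c := by positivity
  set m : ℝ := min c (c ^ 2 / (2 * |a| + c)) with hm
  have hm0 : 0 < m := lt_min hc0 (by positivity)
  refine ⟨Real.sqrt (m / 2), Real.sqrt_pos.mpr (by linarith), fun l => ?_⟩
  have h2 := two_re_sq hk_re hk_im hγ l
  have hzre : ((l:ℂ)^2 - k^2).re = l ^ 2 - a := by
    simp [ha, pow_two, Complex.sub_re, Complex.mul_re]
  have hzim : ((l:ℂ)^2 - k^2).im = -c := by
    simp [hc, pow_two, Complex.sub_im, Complex.mul_im]; ring
  set A : ℝ := ‖(l:ℂ)^2 - k^2‖ with hA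
  set r : ℝ := ((l:ℂ)^2 - k^2).re with hr
  have hsum : 2 * (γ l).re ^ 2 = A + r := by
    have := h2.1; have := h2.2; linarith
  have hAc : c ≤ A := by
    have := Complex.abs_im_le_norm ((l:ℂ)^2 - k^2)
    rw [hzim] at this
    rwa [abs_neg, abs_of_pos hc0] at this
  have hAr : |r| ≤ A := by
    have := Complex.abs_re_le_norm ((l:ℂ)^2 - k^2); rwa [← hr, ← hA] at this
  have hmain : m ≤ 2 * (γ l).re ^ 2 := by
    rcases le_or_gt 0 r with h0 | h0
    · calc m ≤ c := min_le_left _ _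
        _ ≤ A + r := by linarith
        _ = _ := hsum.symm
    · -- r < 0, so l^2 < a, a > 0, |r| ≤ |a|
      have hra : -a ≤ r := by rw [hzre]; nlinarith [sq_nonneg l]
      have hrabs : |r| ≤ |a| := by
        rw [abs_of_neg h0]
        calc -r ≤ a := by linarith
          _ ≤ |a| := le_abs_self a
      have hAsq : A ^ 2 = r ^ 2 + c ^ 2 := by
        have h1 := h2.1; have h3 := h2.2
        have : A ^ 2 = ((γ l).re ^ 2 + (γ l).im ^ 2) ^ 2 := by rw [h3]
        rw [this]
        have hrr : r = (γ l).re ^ 2 - (γ l).im ^ 2 := h1.symm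
        have hcc : c ^ 2 = (2 * (γ l).re * (γ l).im) ^ 2 := by
          have himeq : 2 * (γ l).re * (γ l).im = -c := by
            have hsqim : (γ l ^ 2).im = ((l:ℂ)^2 - k^2).im := by
              rw [hγ, sq, ← Complex.cpow_add _ _ (z_ne' hk_re hk_im l)]; norm_num
            have : (γ l ^ 2).im = 2 * (γ l).re * (γ l).im := by
              simp [pow_two, Complex.mul_im]; ring
            rw [this] at hsqim; rw [hsqim, hzim]
          rw [himeq]; ring
        rw [hrr, hcc]; ring
      have hArpos : 0 < A - r := by linarith
      have hAup : A ≤ |r| + c := by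
        nlinarith [hAsq, _root_.sq_abs r, abs_nonneg r, hc0, hAc]
      have hArle : A - r ≤ 2 * |a| + c := by
        rw [abs_of_neg h0] at hAup
        linarith [neg_abs_le a, le_abs_self a]
      have hprod : (A + r) * (A - r) = c ^ 2 := by linear_combination hAsq
      have hAr0 : 0 ≤ A + r := by
        have := neg_abs_le r; linarith
      calc m ≤ c ^ 2 / (2 * |a| + c) := min_le_right _ _
        _ ≤ A + r := by
          rw [div_le_iff₀ hden]
          calc c ^ 2 = (A + r) * (A - r) := hprod.symm
            _ ≤ (A + r) * (2 * |a| + c) := mul_le_mul_of_nonneg_left hArle hAr0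
        _ = _ := hsum.symm
  have hre := gamma_re_pos' hk_re hk_im hγ l
  have : Real.sqrt (m / 2) ≤ Real.sqrt ((γ l).re ^ 2) := by
    apply Real.sqrt_le_sqrt; linarith
  rwa [Real.sqrt_sq hre.le] at this

/-- growth lower bound and size upper bound. -/
lemma gamma_growth (hk_re : 0 < k.re) (hk_im : 0 < k.im)
    (hγ : ∀ l : ℝ, γ l = ((l : ℂ) ^ 2 - k ^ 2) ^ ((1 : ℂ) / 2)) :
    ∃ R : ℝ, 0 ≤ R ∧ ∀ l : ℝ, (|l| - R) / 2 ≤ (γ l).re ∧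
      ‖γ l‖ ≤ |l| + ‖k‖ := by
  set a : ℝ := k.re ^ 2 - k.im ^ 2 with ha
  refine ⟨Real.sqrt (2 * |a|), Real.sqrt_nonneg _, fun l => ?_⟩
  have h2 := two_re_sq hk_re hk_im hγ l
  have hre := gamma_re_pos' hk_re hk_im hγ l
  have hzre : ((l:ℂ)^2 - k^2).re = l ^ 2 - a := by
    simp [ha, pow_two, Complex.sub_re, Complex.mul_re]
  constructor
  · rcases le_or_gt (|l|) (Real.sqrt (2 * |a|)) with h | h
    · linarith
    · have hsq : 2 * |a| < l ^ 2 := by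
        have := Real.sq_sqrt (by positivity : (0:ℝ) ≤ 2 * |a|)
        nlinarith [Real.sqrt_nonneg (2 * |a|), abs_nonneg l, _root_.sq_abs l]
      have hresq : l ^ 2 / 2 ≤ (γ l).re ^ 2 := by
        have h1 := h2.1
        have : l ^ 2 - a ≤ (γ l).re ^ 2 := by
          rw [← hzre]; nlinarith [sq_nonneg (γ l).im]
        have : l ^ 2 - |a| ≤ (γ l).re ^ 2 := by
          have := le_abs_self a; linarith
        linarith
      have : |l| / 2 ≤ (γ l).re := by nlinarith [_root_.sq_abs l, abs_nonneg l]
      linarith [Real.sqrt_nonneg (2 * |a|)]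
  · have h3 := h2.2
    have heq : ‖γ l‖ ^ 2 = ‖(l:ℂ)^2 - k^2‖ := by
      rw [Complex.sq_norm, Complex.normSq_apply]
      nlinarith
    have hsub : ‖(l:ℂ)^2 - k^2‖ ≤ |l|^2 + ‖k‖ ^ 2 := by
      calc ‖(l:ℂ)^2 - k^2‖ ≤ ‖(l:ℂ)^2‖ + ‖k^2‖ := by
            exact norm_sub_le ((l:ℂ)^2) (k^2)
        _ = |l|^2 + ‖k‖ ^ 2 := by simp
    have habs : ‖γ l‖ ^ 2 ≤ (|l| + ‖k‖) ^ 2 := by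
      nlinarith [abs_nonneg l, norm_nonneg k]
    exact (pow_le_pow_iff_left₀ (norm_nonneg _)
      (by positivity) (by norm_num)).mp habs

end Gamma


section Master
variable {k : ℂ} {γ : ℝ → ℂ}

lemma integrable_master (hk_re : 0 < k.re) (hk_im : 0 < k.im)
    (hγ : ∀ l : ℝ, γ l = ((l : ℂ) ^ 2 - k ^ 2) ^ ((1 : ℂ) / 2))
    (v : ℝ → ℂ) (hv : AEStronglyMeasurable v volume) {V : ℝ} (hV : ∀ l, ‖v l‖ ≤ V)
    {t : ℝ} (ht : 0 < t) :
    Integrable (fun l : ℝ => Complex.exp (-γ l * t) * v l) := by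
  obtain ⟨R, hR0, hR⟩ := gamma_growth hk_re hk_im hγ
  have hVnn : 0 ≤ V := le_trans (norm_nonneg _) (hV 0)
  apply Integrable.mono'
    (((integrable_exp_neg_abs' (show 0 < t/2 by linarith)).const_mul
      (V * Real.exp (R * t / 2))))
  · exact ((Complex.measurable_exp.comp
      (((gamma_measurable hk_re hk_im hγ).neg).mul_const _)).aestronglyMeasurable.mul hv)
  · filter_upwards with l
    rw [norm_mul]
    have h1 : ‖Complex.exp (-γ l * (t:ℂ))‖ = Real.exp (-(γ l).re * t) := by
      rw [Complex.norm_exp]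
      congr 1
      simp [Complex.mul_re]
    rw [h1]
    have h2 : -(γ l).re * t ≤ R * t / 2 + (-(t/2) * |l|) := by
      have := (hR l).1
      nlinarith
    calc Real.exp (-(γ l).re * t) * ‖v l‖
        ≤ Real.exp (R * t / 2 + (-(t/2) * |l|)) * V := by
          apply mul_le_mul (Real.exp_le_exp.mpr h2) (hV l) (norm_nonneg _) (Real.exp_pos _).le
      _ = V * Real.exp (R * t / 2) * Real.exp (-(t/2) * |l|) := by
          rw [Real.exp_add]; ring

lemma hasDerivAt_master (hk_re : 0 < k.re) (hk_im : 0 < k.im)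
    (hγ : ∀ l : ℝ, γ l = ((l : ℂ) ^ 2 - k ^ 2) ^ ((1 : ℂ) / 2))
    (v : ℝ → ℂ) (hv : AEStronglyMeasurable v volume) {V : ℝ} (hV : ∀ l, ‖v l‖ ≤ V)
    {t₀ : ℝ} (ht₀ : 0 < t₀) :
    Integrable (fun l : ℝ => -γ l * (Complex.exp (-γ l * t₀) * v l)) ∧
    HasDerivAt (fun t : ℝ => ∫ l : ℝ, Complex.exp (-γ l * t) * v l)
      (∫ l : ℝ, -γ l * (Complex.exp (-γ l * t₀) * v l)) t₀ := by
  obtain ⟨R, hR0, hR⟩ := gamma_growth hk_re hk_im hγ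
  have hVnn : 0 ≤ V := le_trans (norm_nonneg _) (hV 0)
  have hγm := gamma_measurable hk_re hk_im hγ
  set K : ℝ := ‖k‖ with hK
  have hK0 : 0 ≤ K := norm_nonneg k
  set bound : ℝ → ℝ :=
    fun l => V * Real.exp (R * t₀ / 4) * (8 / t₀ + K) * Real.exp (-(t₀/8) * |l|) with hbd
  have hbound_int : Integrable bound :=
    (integrable_exp_neg_abs' (show 0 < t₀/8 by linarith)).const_mul _
  have key := hasDerivAt_integral_of_dominated_loc_of_deriv_le
    (F := fun (t : ℝ) (l : ℝ) => Complex.exp (-γ l * t) * v l)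
    (F' := fun (t : ℝ) (l : ℝ) => -γ l * (Complex.exp (-γ l * t) * v l))
    (x₀ := t₀) (bound := bound) (s := Metric.ball t₀ (t₀/2)) (Metric.ball_mem_nhds _ (by linarith))
    (Filter.Eventually.of_forall fun x =>
      ((Complex.measurable_exp.comp
        ((hγm.neg).mul_const _)).aestronglyMeasurable.mul hv))
    (integrable_master hk_re hk_im hγ v hv hV ht₀)
    (((hγm.neg).aestronglyMeasurable.mul
      ((Complex.measurable_exp.comp
        ((hγm.neg).mul_const _)).aestronglyMeasurable.mul hv)))
    ?_ hbound_int ?_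
  · exact ⟨key.1, key.2⟩
  · -- bound
    apply Filter.Eventually.of_forall
    intro l x hx
    have hx2 : t₀/2 < x := by
      rw [Metric.mem_ball, Real.dist_eq, abs_sub_lt_iff] at hx
      linarith
    have hre := gamma_re_pos' hk_re hk_im hγ l
    have hgrow := (hR l).1
    have habs := (hR l).2
    rw [norm_mul, norm_mul]
    have h1 : ‖Complex.exp (-γ l * (x:ℂ))‖ = Real.exp (-(γ l).re * x) := by
      rw [Complex.norm_exp]
      congr 1
      simp [Complex.mul_re]
    rw [h1]
    have hnγ : ‖-γ l‖ ≤ |l| + K := by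
      rw [norm_neg]; exact habs
    have hexp1 : Real.exp (-(γ l).re * x) ≤
        Real.exp (R * t₀ / 4) * Real.exp (-(t₀/4) * |l|) := by
      rw [← Real.exp_add]
      apply Real.exp_le_exp.mpr
      nlinarith
    have hpoly : |l| + K ≤ (8 / t₀ + K) * Real.exp ((t₀/8) * |l|) := by
      have h3 : (t₀/8) * |l| + 1 ≤ Real.exp ((t₀/8) * |l|) := Real.add_one_le_exp _
      have h4 : (0:ℝ) ≤ (t₀/8) * |l| := by positivity
      have h5 : 1 ≤ Real.exp ((t₀/8) * |l|) := by linarith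
      have h6 : |l| ≤ (8/t₀) * Real.exp ((t₀/8) * |l|) := by
        have h9 := mul_le_mul_of_nonneg_left h3 (show (0:ℝ) ≤ 8/t₀ by positivity)
        have h7 : (8/t₀) * ((t₀/8) * |l| + 1) = |l| + 8/t₀ := by
          field_simp
        have h8 : (0:ℝ) ≤ 8/t₀ := by positivity
        linarith
      nlinarith [abs_nonneg l]
    calc ‖-γ l‖ * (Real.exp (-(γ l).re * x) * ‖v l‖)
        ≤ (|l| + K) * ((Real.exp (R * t₀ / 4) * Real.exp (-(t₀/4) * |l|)) * V) := by
          apply mul_le_mul hnγ _ (by positivity) (by positivity)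
          apply mul_le_mul hexp1 (hV l) (norm_nonneg _) (by positivity)
      _ ≤ ((8 / t₀ + K) * Real.exp ((t₀/8) * |l|)) *
            ((Real.exp (R * t₀ / 4) * Real.exp (-(t₀/4) * |l|)) * V) := by
          apply mul_le_mul_of_nonneg_right hpoly (by positivity)
      _ = bound l := by
          rw [hbd]
          simp only []
          rw [show -(t₀/4) * |l| = -(t₀/8) * |l| + -(t₀/8)*|l| by ring, Real.exp_add,
            show -(t₀/8)*|l| = -((t₀/8)*|l|) by ring, Real.exp_neg]
          field_simp
  · -- differentiability
    apply Filter.Eventually.of_forall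
    intro l x hx
    have := (hasDerivAt_cexp_real (-γ l) x).mul_const (v l)
    rw [show -γ l * (Complex.exp (-γ l * x) * v l) = -γ l * Complex.exp (-γ l * x) * v l by ring]
    exact this

end Master

end HybridAux

section HybridAux2
open Complex Set

/-- The hybrid representation of the half-space impedance Green's function —
incoming Sommerfeld field, reflected image, finite segment of real images at
depths `2y₀ + η`, `η ∈ [0, C]`, with density `2iα·e^{iαη}`, and the
Sommerfeld-like tail — is differentiable in `y` at the interface `y = 0`
(from within `[0,∞)`, where it is defined) and satisfies the homogeneous
impedance condition `−∂g/∂y − iα·g = 0` there. -/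
theorem hybrid_representation_impedance_condition (k α : ℂ)
    (hk_re : 0 < k.re) (hk_im : 0 < k.im) (hα : 0 ≤ α.im)
    (C : ℝ) (hC : 0 < C)
    (x₀ y₀ : ℝ) (hy₀ : 0 < y₀)
    (γ : ℝ → ℂ) (hγ : ∀ l : ℝ, γ l = ((l : ℂ) ^ 2 - k ^ 2) ^ ((1 : ℂ) / 2))
    (g : ℝ → ℝ → ℂ)
    (hg : ∀ x y : ℝ, 0 ≤ y → y < y₀ → g x y =
      (1 / (4 * (Real.pi : ℂ))) * (∫ l : ℝ,
          Complex.exp (γ l * (y - y₀)) *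
            Complex.exp (Complex.I * l * (x - x₀)) / γ l) +
      (1 / (4 * (Real.pi : ℂ))) * (∫ l : ℝ,
          Complex.exp (-γ l * (y + y₀)) *
            Complex.exp (Complex.I * l * (x - x₀)) / γ l) +
      2 * Complex.I * α * (∫ η in (0 : ℝ)..C,
          ((1 / (4 * (Real.pi : ℂ))) * ∫ l : ℝ,
              Complex.exp (-γ l * (y + y₀ + η)) *
                Complex.exp (Complex.I * l * (x - x₀)) / γ l) *
            Complex.exp (Complex.I * α * η)) +
      (Complex.I * α / (2 * (Real.pi : ℂ))) * (∫ l : ℝ,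
          Complex.exp (-γ l * (y + y₀)) *
            (Complex.exp (-(γ l - Complex.I * α) * C) / (γ l - Complex.I * α)) *
            Complex.exp (Complex.I * l * (x - x₀)) / γ l))
    (x : ℝ) :
    ∃ d : ℂ, HasDerivWithinAt (fun y : ℝ => g x y) d (Set.Ici 0) 0 ∧
      -d - Complex.I * α * g x 0 = 0 := by
  obtain ⟨ρ, hρ0, hρ⟩ := gamma_re_uniform hk_re hk_im hγ
  have hγm := gamma_measurable hk_re hk_im hγ
  have he_norm : ∀ l : ℝ, ‖Complex.exp (Complex.I * l * ((x:ℂ) - (x₀:ℂ)))‖ = 1 := by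
    intro l
    simp only [Complex.norm_exp]
    have h0 : (Complex.I * (l:ℂ) * ((x:ℂ) - (x₀:ℂ))).re = 0 := by
      simp [Complex.mul_re, Complex.mul_im]
    rw [h0, Real.exp_zero]
  have he_meas : Measurable fun l : ℝ => Complex.exp (Complex.I * l * ((x:ℂ) - (x₀:ℂ))) := by
    apply Complex.measurable_exp.comp
    exact (measurable_const.mul Complex.measurable_ofReal).mul_const _
  have habs_ge : ∀ l, ρ ≤ ‖γ l‖ := fun l =>
    le_trans (hρ l) (le_trans (le_abs_self _) (Complex.abs_re_le_norm _))
  have hshift_re : ∀ l, ρ ≤ (γ l - Complex.I * α).re := by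
    intro l
    have h0 : (γ l - Complex.I * α).re = (γ l).re + α.im := by
      simp [Complex.sub_re, Complex.mul_re]
    rw [h0]
    linarith [hρ l]
  have hshift_abs : ∀ l, ρ ≤ ‖γ l - Complex.I * α‖ := fun l =>
    le_trans (hshift_re l) (le_trans (le_abs_self _) (Complex.abs_re_le_norm _))
  have hshift_ne : ∀ l, γ l - Complex.I * α ≠ 0 := by
    intro l h
    have h2 := hshift_abs l
    rw [h] at h2
    simp at h2
    linarith
  have hγne : ∀ l, γ l ≠ 0 := by
    intro l h
    have h2 := habs_ge l
    rw [h] at h2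
    simp at h2
    linarith
  set v₁ : ℝ → ℂ := fun l => Complex.exp (Complex.I * l * ((x:ℂ) - (x₀:ℂ))) / γ l with hv₁
  set v₂ : ℝ → ℂ := fun l =>
    Complex.exp (-(γ l - Complex.I * α) * C) / (γ l - Complex.I * α) *
      Complex.exp (Complex.I * l * ((x:ℂ) - (x₀:ℂ))) / γ l with hv₂
  have hv₁m : AEStronglyMeasurable v₁ volume :=
    (he_meas.div hγm).aestronglyMeasurable
  have hv₂m : AEStronglyMeasurable v₂ volume := by
    apply Measurable.aestronglyMeasurable
    apply Measurable.div _ hγm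
    apply Measurable.mul _ he_meas
    apply Measurable.div _ (hγm.sub_const _)
    exact Complex.measurable_exp.comp ((hγm.sub_const _).neg.mul_const _)
  have hv₁b : ∀ l, ‖v₁ l‖ ≤ 1 / ρ := by
    intro l
    simp only [hv₁, norm_div, he_norm l]
    exact one_div_le_one_div_of_le hρ0 (habs_ge l)
  have hv₂b : ∀ l, ‖v₂ l‖ ≤ 1 / (ρ * ρ) := by
    intro l
    simp only [hv₂, norm_div, norm_mul, he_norm l, mul_one]
    rw [div_div]
    have h1 : ‖Complex.exp (-(γ l - Complex.I * α) * C)‖ ≤ 1 := by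
      rw [Complex.norm_exp, Real.exp_le_one_iff]
      have h2 : (-(γ l - Complex.I * α) * (C:ℂ)).re = -((γ l).re + α.im) * C := by
        rw [Complex.mul_re]
        simp only [Complex.ofReal_re, Complex.ofReal_im, mul_zero, sub_zero,
          Complex.neg_re, Complex.sub_re, Complex.mul_re, Complex.I_re, Complex.I_im]
        ring
      rw [h2]
      nlinarith [hρ l]
    apply div_le_div₀ (by norm_num) h1 (by positivity)
    exact mul_le_mul (hshift_abs l) (habs_ge l) hρ0.le (norm_nonneg _)
  -- master derivative facts at y₀
  have hM₁ := hasDerivAt_master hk_re hk_im hγ v₁ hv₁m hv₁b hy₀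
  have hM₂ := hasDerivAt_master hk_re hk_im hγ v₂ hv₂m hv₂b hy₀
  set h₁ : ℝ → ℂ := fun t : ℝ => ∫ l : ℝ, Complex.exp (-γ l * t) * v₁ l with hh₁
  set h₂ : ℝ → ℂ := fun t : ℝ => ∫ l : ℝ, Complex.exp (-γ l * t) * v₂ l with hh₂
  set D₁ : ℂ := ∫ l : ℝ, -γ l * (Complex.exp (-γ l * y₀) * v₁ l) with hD₁
  set D₂ : ℂ := ∫ l : ℝ, -γ l * (Complex.exp (-γ l * y₀) * v₂ l) with hD₂
  have hcont₁ : ∀ t : ℝ, 0 < t → ContinuousAt h₁ t := fun t ht =>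
    (hasDerivAt_master hk_re hk_im hγ v₁ hv₁m hv₁b ht).2.continuousAt
  set F : ℝ → ℂ := fun u : ℝ => (1 / (4 * (Real.pi : ℂ))) * h₁ (u + y₀) with hF
  set G : ℝ → ℂ := fun u : ℝ => F u * Complex.exp (Complex.I * α * u) with hG
  have hFcont : ∀ u : ℝ, -y₀ < u → ContinuousAt F u := by
    intro u hu
    apply ContinuousAt.mul continuousAt_const
    exact ContinuousAt.comp (g := h₁) (f := fun u : ℝ => u + y₀)
      (hcont₁ (u + y₀) (by linarith))
      ((continuous_id.add continuous_const).continuousAt)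
  have hGcont : ∀ u : ℝ, -y₀ < u → ContinuousAt G u := by
    intro u hu
    apply (hFcont u hu).mul
    exact (Complex.continuous_exp.comp
      (continuous_const.mul Complex.continuous_ofReal)).continuousAt
  have hGOn : ContinuousOn G (Set.Ioi (-y₀)) := fun u hu =>
    (hGcont u hu).continuousWithinAt
  have hGint : ∀ a b : ℝ, -y₀ < a → -y₀ < b → IntervalIntegrable G volume a b := by
    intro a b ha hb
    apply ContinuousOn.intervalIntegrable
    intro u hu
    rcases Set.mem_uIcc.mp hu with h | h
    · exact (hGcont u (by linarith [h.1])).continuousWithinAt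
    · exact (hGcont u (by linarith [h.1])).continuousWithinAt
  have hH1 : HasDerivAt (fun y : ℝ => ∫ u in (0:ℝ)..y, G u) (G 0) 0 :=
    intervalIntegral.integral_hasDerivAt_right (hGint 0 0 (by linarith) (by linarith))
      (ContinuousOn.stronglyMeasurableAtFilter isOpen_Ioi hGOn 0 (Set.mem_Ioi.mpr (by linarith)))
      (hGcont 0 (by linarith))
  have hH2' : HasDerivAt (fun z : ℝ => ∫ u in (0:ℝ)..z, G u) (G C) (0 + C) := by
    rw [zero_add]
    exact intervalIntegral.integral_hasDerivAt_right (hGint 0 C (by linarith) (by linarith))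
      (ContinuousOn.stronglyMeasurableAtFilter isOpen_Ioi hGOn C (Set.mem_Ioi.mpr (by linarith)))
      (hGcont C (by linarith))
  have hH2 : HasDerivAt (fun y : ℝ => ∫ u in (0:ℝ)..(y + C), G u) (G C) 0 :=
    HasDerivAt.comp_add_const 0 C hH2'
  have hH : HasDerivAt (fun y : ℝ => ∫ u in y..(y + C), G u) (G C - G 0) 0 := by
    apply (hH2.sub hH1).congr_of_eventuallyEq
    have hball : Set.Ioo (-(y₀/2)) (y₀/2) ∈ nhds (0:ℝ) :=
      Ioo_mem_nhds (by linarith) (by linarith)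
    filter_upwards [hball] with y hy
    rcases hy with ⟨hy1, hy2⟩
    exact (intervalIntegral.integral_interval_sub_left
      (hGint 0 (y + C) (by linarith) (by linarith))
      (hGint 0 y (by linarith) (by linarith))).symm
  have hexpσ : HasDerivAt (fun y : ℝ => Complex.exp (-(Complex.I * α) * y))
      (-(Complex.I * α) * Complex.exp (-(Complex.I * α) * ((0:ℝ):ℂ))) 0 :=
    hasDerivAt_cexp_real (-(Complex.I * α)) 0
  have hSeg : HasDerivAt
      (fun y : ℝ => Complex.exp (-(Complex.I * α) * y) * ∫ u in y..(y + C), G u)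
      (-(Complex.I * α) * (∫ u in (0:ℝ)..C, G u) + (G C - G 0)) 0 := by
    have h3 := hexpσ.mul hH
    simp only [Complex.ofReal_zero, mul_zero, Complex.exp_zero, mul_one, one_mul, zero_add] at h3
    exact h3
  have hA : HasDerivAt (fun y : ℝ => h₁ (y₀ - y)) (-D₁) 0 :=
    HasDerivAt.comp_const_sub y₀ 0 (by rw [sub_zero]; exact hM₁.2)
  have hB : HasDerivAt (fun y : ℝ => h₁ (y + y₀)) D₁ 0 :=
    HasDerivAt.comp_add_const 0 y₀ (by rw [zero_add]; exact hM₁.2)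
  have hT : HasDerivAt (fun y : ℝ => h₂ (y + y₀)) D₂ 0 :=
    HasDerivAt.comp_add_const 0 y₀ (by rw [zero_add]; exact hM₂.2)
  set Φ : ℝ → ℂ := fun y : ℝ =>
    (1 / (4 * (Real.pi : ℂ))) * h₁ (y₀ - y) +
    (1 / (4 * (Real.pi : ℂ))) * h₁ (y + y₀) +
    2 * Complex.I * α *
      (Complex.exp (-(Complex.I * α) * y) * ∫ u in y..(y + C), G u) +
    (Complex.I * α / (2 * (Real.pi : ℂ))) * h₂ (y + y₀) with hΦdef
  set d : ℂ :=
    (1 / (4 * (Real.pi : ℂ))) * (-D₁) +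
    (1 / (4 * (Real.pi : ℂ))) * D₁ +
    2 * Complex.I * α *
      (-(Complex.I * α) * (∫ u in (0:ℝ)..C, G u) + (G C - G 0)) +
    (Complex.I * α / (2 * (Real.pi : ℂ))) * D₂ with hddef
  have hΦ : HasDerivAt Φ d 0 :=
    (((hA.const_mul _).add (hB.const_mul _)).add (hSeg.const_mul _)).add (hT.const_mul _)
  -- matching g with Φ on [0, y₀)
  have hmatch : ∀ y : ℝ, 0 ≤ y → y < y₀ → g x y = Φ y := by
    intro y hy0 hyy
    have hterm1 : (∫ l : ℝ, Complex.exp (γ l * ((y:ℂ) - (y₀:ℂ))) *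
        Complex.exp (Complex.I * l * ((x:ℂ) - (x₀:ℂ))) / γ l) = h₁ (y₀ - y) := by
      simp only [hh₁]
      apply integral_congr_ae
      refine Filter.Eventually.of_forall fun l => ?_
      simp only [hv₁]
      rw [show γ l * ((y:ℂ) - (y₀:ℂ)) = -γ l * (((y₀ - y : ℝ)):ℂ) by push_cast; ring]
      ring
    have hterm2 : (∫ l : ℝ, Complex.exp (-γ l * ((y:ℂ) + (y₀:ℂ))) *
        Complex.exp (Complex.I * l * ((x:ℂ) - (x₀:ℂ))) / γ l) = h₁ (y + y₀) := by
      simp only [hh₁]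
      apply integral_congr_ae
      refine Filter.Eventually.of_forall fun l => ?_
      simp only [hv₁]
      rw [show -γ l * ((y:ℂ) + (y₀:ℂ)) = -γ l * (((y + y₀ : ℝ)):ℂ) by push_cast; ring]
      ring
    have hterm4 : (∫ l : ℝ, Complex.exp (-γ l * ((y:ℂ) + (y₀:ℂ))) *
        (Complex.exp (-(γ l - Complex.I * α) * C) / (γ l - Complex.I * α)) *
        Complex.exp (Complex.I * l * ((x:ℂ) - (x₀:ℂ))) / γ l) = h₂ (y + y₀) := by
      simp only [hh₂]
      apply integral_congr_ae
      refine Filter.Eventually.of_forall fun l => ?_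
      simp only [hv₂]
      rw [show -γ l * ((y:ℂ) + (y₀:ℂ)) = -γ l * (((y + y₀ : ℝ)):ℂ) by push_cast; ring]
      ring
    have hterm3 : (∫ η in (0:ℝ)..C,
        ((1 / (4 * (Real.pi : ℂ))) * ∫ l : ℝ,
          Complex.exp (-γ l * ((y:ℂ) + (y₀:ℂ) + (η:ℂ))) *
            Complex.exp (Complex.I * l * ((x:ℂ) - (x₀:ℂ))) / γ l) *
          Complex.exp (Complex.I * α * η)) =
        Complex.exp (-(Complex.I * α) * y) * ∫ u in y..(y + C), G u := by
      have hfun : ∀ η : ℝ,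
          ((1 / (4 * (Real.pi : ℂ))) * ∫ l : ℝ,
            Complex.exp (-γ l * ((y:ℂ) + (y₀:ℂ) + (η:ℂ))) *
              Complex.exp (Complex.I * l * ((x:ℂ) - (x₀:ℂ))) / γ l) *
            Complex.exp (Complex.I * α * η) =
          Complex.exp (-(Complex.I * α) * y) * G (y + η) := by
        intro η
        have hinner : (∫ l : ℝ,
            Complex.exp (-γ l * ((y:ℂ) + (y₀:ℂ) + (η:ℂ))) *
              Complex.exp (Complex.I * l * ((x:ℂ) - (x₀:ℂ))) / γ l) =
            h₁ ((y + η) + y₀) := by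
          simp only [hh₁]
          apply integral_congr_ae
          refine Filter.Eventually.of_forall fun l => ?_
          simp only [hv₁]
          rw [show -γ l * ((y:ℂ) + (y₀:ℂ) + (η:ℂ))
              = -γ l * ((((y + η) + y₀ : ℝ)) : ℂ) by push_cast; ring]
          ring
        simp only [hG, hF, hinner]
        rw [show Complex.I * α * ((η:ℝ):ℂ)
            = -(Complex.I * α) * ((y:ℝ):ℂ) + Complex.I * α * (((y + η : ℝ)):ℂ) by
              push_cast; ring]
        rw [Complex.exp_add]
        ring
      rw [intervalIntegral.integral_congr (fun η _ => hfun η)]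
      rw [intervalIntegral.integral_const_mul]
      congr 1
      rw [intervalIntegral.integral_comp_add_left G y]
      norm_num
    rw [hg x y hy0 hyy, hterm1, hterm2, hterm3, hterm4, hΦdef]
  have hval : g x 0 = Φ 0 := hmatch 0 le_rfl hy₀
  have hgd : HasDerivWithinAt (fun y : ℝ => g x y) d (Set.Ici 0) 0 := by
    apply (hΦ.hasDerivWithinAt).congr_of_eventuallyEq _ hval
    filter_upwards [nhdsWithin_le_nhds (Iio_mem_nhds hy₀), self_mem_nhdsWithin] with y hy1 hy2
    exact hmatch y hy2 hy1
  -- the key integral identity for the tail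
  have hrel : Complex.I * α * h₂ y₀ + D₂
      = -(Complex.exp (Complex.I * α * C)) * h₁ (y₀ + C) := by
    have hIh₂ : Integrable (fun l : ℝ => Complex.exp (-γ l * y₀) * v₂ l) :=
      integrable_master hk_re hk_im hγ v₂ hv₂m hv₂b hy₀
    have hID₂ := hM₂.1
    simp only [hh₁, hh₂, hD₂]
    rw [show Complex.I * α * (∫ l : ℝ, Complex.exp (-γ l * y₀) * v₂ l)
        = ∫ l : ℝ, Complex.I * α * (Complex.exp (-γ l * y₀) * v₂ l) from
      (integral_const_mul _ _).symm]
    rw [show -(Complex.exp (Complex.I * α * C)) *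
        (∫ l : ℝ, Complex.exp (-γ l * ((y₀ + C : ℝ):ℂ)) * v₁ l)
        = ∫ l : ℝ, -(Complex.exp (Complex.I * α * C)) *
          (Complex.exp (-γ l * ((y₀ + C : ℝ):ℂ)) * v₁ l) from
      (integral_const_mul _ _).symm]
    rw [← integral_add (hIh₂.const_mul _) hID₂]
    apply integral_congr_ae
    refine Filter.Eventually.of_forall fun l => ?_
    simp only [hv₁, hv₂]
    rw [show -γ l * (((y₀ + C : ℝ)):ℂ) = -γ l * ((y₀:ℝ):ℂ) + -γ l * ((C:ℝ):ℂ) by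
      push_cast; ring]
    rw [Complex.exp_add]
    rw [show -(γ l - Complex.I * α) * ((C:ℝ):ℂ)
        = -γ l * ((C:ℝ):ℂ) + Complex.I * α * ((C:ℝ):ℂ) by ring]
    rw [Complex.exp_add]
    field_simp [hγne l, hshift_ne l]
    ring
  refine ⟨d, hgd, ?_⟩
  rw [hval]
  simp only [hΦdef, hddef, hG, hF]
  simp only [Complex.ofReal_zero, mul_zero, Complex.exp_zero, mul_one, zero_add,
    sub_zero, add_zero, one_mul, neg_zero]
  rw [show C + y₀ = y₀ + C from add_comm C y₀]
  linear_combination (-(Complex.I * α / (2 * (Real.pi:ℂ)))) * hrel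

end HybridAux2
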